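/- arXiv:1905.08326 — 4 statements merged into one kernel-verified Lean document; each statement's English description precedes it below -/
import Mathlib

section
/- The pure twin group \(\overline{P}_6\) is not a free group: there is no set \(X\) such that \(\overline{P}_6\) is isomorphic to the free group on \(X\). -/
/-- The defining relations of the twin (planar braid) group on `n + 1` strands,
with generators `σ₁, …, σ_n` indexed by `Fin n`: the squares of the generators
and the commutators of pairs of generators at distance greater than one. -/
def twinRels (n : ℕ) : Set (FreeGroup (Fin n)) :=
  {r | (∃ i : Fin n, r = .of i * .of i) ∨
    ∃ i j : Fin n, (i : ℕ) + 1 < (j : ℕ) ∧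
      r = .of i * .of j * (.of i)⁻¹ * (.of j)⁻¹}

/-- The twin (planar braid) group `B̄_{n+1}` on `n + 1` strands. -/
abbrev TwinGroup (n : ℕ) := PresentedGroup (twinRels n)

theorem twinRels_hold (n : ℕ) :
    ∀ r ∈ twinRels n,
      FreeGroup.lift (fun i : Fin n => Equiv.swap (i.castSucc) (i.succ)) r = 1 := by
  rintro r (⟨i, rfl⟩ | ⟨i, j, hij, rfl⟩)
  · simp only [map_mul, FreeGroup.lift_apply_of]
    exact Equiv.swap_mul_self _ _
  · simp only [map_mul, map_inv, FreeGroup.lift_apply_of]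
    have hd : (Equiv.swap (i.castSucc) (i.succ)).Disjoint
        (Equiv.swap (j.castSucc) (j.succ)) := by
      intro x
      by_cases h1 : x = i.castSucc
      · right; subst h1
        apply Equiv.swap_apply_of_ne_of_ne <;> simp [Fin.ext_iff] <;> omega
      by_cases h2 : x = i.succ
      · right; subst h2
        apply Equiv.swap_apply_of_ne_of_ne <;> simp [Fin.ext_iff] <;> omega
      · left; exact Equiv.swap_apply_of_ne_of_ne h1 h2
    rw [hd.commute.eq]
    group

/-- The permutation homomorphism of the twin group on `n + 1` strands,
sending `σ_i` to the adjacent transposition `(i, i+1)`. -/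
def twinPerm (n : ℕ) : TwinGroup n →* Equiv.Perm (Fin (n + 1)) :=
  PresentedGroup.toGroup (twinRels_hold n)


/-!
The elements `a = (σ₁σ₂)³` and `b = (σ₄σ₅)³` are pure, since `σ₁σ₂` and `σ₄σ₅` permute the strands
as 3-cycles, and they commute, since their letters are pairwise far apart. Sending
`σ₁, σ₂, σ₃, σ₄, σ₅` to `(s₀, 1), (s₁, 1), 1, (1, s₀), (1, s₁)` in the square of the infinite
dihedral group maps `a` and `b` to the translations `(r³, 1)` and `(1, r³)`, so they generate a
copy of `ℤ²`. In a free group, however, two commuting elements generate a free abelian, hence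
cyclic, subgroup, which cannot contain `ℤ²`.
-/

theorem FreeGroup.eq_of_commute_of {α : Type*} {x y : α}
    (h : Commute (FreeGroup.of x) (FreeGroup.of y)) : x = y := by
  classical
  by_contra hne
  have := h.map (FreeGroup.lift fun z : α =>
    if z = x then Equiv.swap (0 : Fin 3) 1 else if z = y then Equiv.swap 1 2 else 1)
  simp only [FreeGroup.lift_apply_of, ↓reduceIte, Ne.symm hne] at this
  exact absurd this.eq (by decide)

theorem IsFreeGroup.isCyclic_of_isMulCommutative {G : Type*} [Group G] [IsFreeGroup G]
    [IsMulCommutative G] : IsCyclic G := by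
  have h (a b : G) : Commute a b := Std.Commutative.comm a b
  have : Subsingleton (IsFreeGroup.Generators G) := ⟨fun x y =>
    FreeGroup.eq_of_commute_of <| by
      simpa using (h (IsFreeGroup.mulEquiv G (.of x)) (IsFreeGroup.mulEquiv G (.of y))).map
        (IsFreeGroup.mulEquiv G).symm⟩
  rw [← (IsFreeGroup.mulEquiv G).isCyclic]
  cases isEmpty_or_nonempty (IsFreeGroup.Generators G)
  · infer_instance
  · have := uniqueOfSubsingleton (Classical.arbitrary (IsFreeGroup.Generators G))
    infer_instance

theorem IsCyclic.exists_zpow_mul_zpow_eq_one {G : Type*} [Group G] [IsCyclic G] (u v : G) :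
    ∃ m n : ℤ, (m ≠ 0 ∨ n ≠ 0) ∧ u ^ m * v ^ n = 1 := by
  obtain ⟨c, hc⟩ := IsCyclic.exists_generator (α := G)
  obtain ⟨k, rfl⟩ := Subgroup.mem_zpowers_iff.mp (hc u)
  obtain ⟨l, rfl⟩ := Subgroup.mem_zpowers_iff.mp (hc v)
  by_cases hkl : k = 0 ∧ l = 0
  · exact ⟨1, 0, by simp, by simp [hkl.1]⟩
  · refine ⟨l, -k, by omega, ?_⟩
    rw [← zpow_mul, ← zpow_mul, ← zpow_add, mul_comm k l, mul_neg, add_neg_cancel, zpow_zero]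

theorem IsFreeGroup.exists_zpow_mul_zpow_eq_one_of_commute {G : Type*} [Group G] [IsFreeGroup G]
    {u v : G} (h : Commute u v) : ∃ m n : ℤ, (m ≠ 0 ∨ n ≠ 0) ∧ u ^ m * v ^ n = 1 := by
  let H := Subgroup.closure ({u, v} : Set G)
  have hu : u ∈ H := Subgroup.subset_closure (by simp)
  have hv : v ∈ H := Subgroup.subset_closure (by simp)
  have : IsMulCommutative H := Subgroup.isMulCommutative_closure <| by
    rintro _ (rfl | rfl) _ (rfl | rfl) <;> first | rfl | exact h | exact h.symm
  have := IsFreeGroup.isCyclic_of_isMulCommutative (G := H)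
  obtain ⟨m, n, hmn, hH⟩ := IsCyclic.exists_zpow_mul_zpow_eq_one (⟨u, hu⟩ : H) ⟨v, hv⟩
  exact ⟨m, n, hmn, congrArg Subtype.val hH⟩

namespace TwinGroup

open DihedralGroup

variable {n : ℕ}

theorem commute_of {i j : Fin n} (h : (i : ℕ) + 1 < j) :
    Commute (PresentedGroup.of (rels := twinRels n) i) (PresentedGroup.of j) := by
  have := PresentedGroup.one_of_mem (rels := twinRels n)
    (x := .of i * .of j * (.of i)⁻¹ * (.of j)⁻¹) (Or.inr ⟨i, j, h, rfl⟩)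
  simp only [map_mul, map_inv] at this
  exact commutatorElement_eq_one_iff_commute.mp this

def lift {G : Type*} [Group G] (f : Fin n → G) (hsq : ∀ i, f i * f i = 1)
    (hcomm : ∀ i j : Fin n, (i : ℕ) + 1 < j → Commute (f i) (f j)) : TwinGroup n →* G :=
  PresentedGroup.toGroup (f := f) <| by
    rintro r (⟨i, rfl⟩ | ⟨i, j, hij, rfl⟩)
    · simpa using hsq i
    · simpa [← commutatorElement_def, commutatorElement_eq_one_iff_commute] using hcomm i j hij

@[simp]
theorem lift_of {G : Type*} [Group G] (f : Fin n → G) (hsq : ∀ i, f i * f i = 1)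
    (hcomm : ∀ i j : Fin n, (i : ℕ) + 1 < j → Commute (f i) (f j)) (i : Fin n) :
    lift f hsq hcomm (PresentedGroup.of i) = f i :=
  PresentedGroup.toGroup.of _

theorem twinPerm_of (i : Fin n) :
    twinPerm n (PresentedGroup.of i) = Equiv.swap i.castSucc i.succ :=
  PresentedGroup.toGroup.of _

def sigmaCube (i j : Fin n) : TwinGroup n := (PresentedGroup.of i * PresentedGroup.of j) ^ 3

theorem sigmaCube_mem_ker {i j : Fin n} (hij : (j : ℕ) = i + 1) :
    sigmaCube i j ∈ (twinPerm n).ker := by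
  have h3 : (Equiv.swap i.succ i.castSucc * Equiv.swap i.succ j.succ).IsThreeCycle :=
    Equiv.Perm.isThreeCycle_swap_mul_swap_same (by simp [Fin.ext_iff])
      (by simp [Fin.ext_iff]; omega) (by simp [Fin.ext_iff]; omega)
  have hj : j.castSucc = i.succ := Fin.ext (by simpa using hij)
  rw [MonoidHom.mem_ker, sigmaCube, map_pow, map_mul, twinPerm_of, twinPerm_of, hj,
    Equiv.swap_comm, ← h3.orderOf, pow_orderOf_eq_one]

theorem commute_sigmaCube {i j k l : Fin n} (hik : (i : ℕ) + 1 < k) (hil : (i : ℕ) + 1 < l)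
    (hjk : (j : ℕ) + 1 < k) (hjl : (j : ℕ) + 1 < l) : Commute (sigmaCube i j) (sigmaCube k l) :=
  .pow_pow (.mul_left (.mul_right (commute_of hik) (commute_of hil))
    (.mul_right (commute_of hjk) (commute_of hjl))) 3 3

-- `DihedralGroup 0` is the infinite dihedral group, with translations `r i` for `i : ZMod 0 = ℤ`.
def toDihedralProd : TwinGroup 5 →* DihedralGroup 0 × DihedralGroup 0 :=
  lift ![(sr 0, 1), (sr 1, 1), 1, (1, sr 0), (1, sr 1)] (by decide)
    (by unfold Commute SemiconjBy; decide)

theorem toDihedralProd_sigmaCube_zero_one : toDihedralProd (sigmaCube 0 1) = (r 3, 1) := by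
  simp [toDihedralProd, sigmaCube, sr_mul_sr, r_pow]

theorem toDihedralProd_sigmaCube_three_four : toDihedralProd (sigmaCube 3 4) = (1, r 3) := by
  simp [toDihedralProd, sigmaCube, sr_mul_sr, r_pow]

theorem sigmaCube_zpow_mul_zpow_eq_one {m k : ℤ}
    (h : sigmaCube (n := 5) 0 1 ^ m * sigmaCube 3 4 ^ k = 1) : m = 0 ∧ k = 0 := by
  have h' : ((r 3, 1) : DihedralGroup 0 × DihedralGroup 0) ^ m * (1, r 3) ^ k = 1 := by
    rw [← toDihedralProd_sigmaCube_zero_one, ← toDihedralProd_sigmaCube_three_four, ← map_zpow,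
      ← map_zpow, ← map_mul, h, map_one]
  simp only [Prod.pow_mk, one_zpow, Prod.mk_mul_mk, mul_one, one_mul, Prod.mk_eq_one, r_zpow] at h'
  rw [← r_zero, r.injEq, r.injEq] at h'
  simpa using h'

end TwinGroup

/-- The pure twin group `P̄₆` is not a free group. -/
theorem pureTwin_six_not_free :
    ∀ X : Type, IsEmpty ((MonoidHom.ker (twinPerm 5)) ≃* FreeGroup X) := by
  intro X
  refine ⟨fun φ => ?_⟩
  have := IsFreeGroup.ofMulEquiv φ.symm
  let a : (twinPerm 5).ker := ⟨TwinGroup.sigmaCube 0 1, TwinGroup.sigmaCube_mem_ker rfl⟩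
  let b : (twinPerm 5).ker := ⟨TwinGroup.sigmaCube 3 4, TwinGroup.sigmaCube_mem_ker rfl⟩
  have hab : Commute a b := Subtype.ext <|
    (TwinGroup.commute_sigmaCube (by decide) (by decide) (by decide) (by decide)).eq
  obtain ⟨m, k, hmk, h⟩ := IsFreeGroup.exists_zpow_mul_zpow_eq_one_of_commute hab
  have := TwinGroup.sigmaCube_zpow_mul_zpow_eq_one (congrArg Subtype.val h)
  omega
end

section
/- Let \(f' : G' \to S\) and \(f'' : G'' \to S\) be surjective group homomorphisms with kernels \(K'\) and \(K''\) respectively. Then the kernel of the induced homomorphism \(f' * f'' : G' * G'' \to S\) (which restricts to \(f'\) on \(G'\) and to \(f''\) on \(G''\)) is isomorphic to the free product \(K' * K'' * F(S \setminus \{e\})\), where \(F(S \setminus \{e\})\) is the free group on the set of non-identity elements of \(S\). -/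
/-!
Choose sections `σ'`, `σ''` of `f'`, `f''` with `σ' 1 = σ'' 1 = 1` and let `N` be the kernel of
`F = f' * f''`. The homomorphism `ψ : K' * K'' * F(S ∖ {1}) → N` is the inclusion on `K'` and `K''`
and sends the free generator `x_s` to `σ''(s)⁻¹ σ'(s)`. Its inverse is Reidemeister–Schreier
rewriting with respect to the transversal `σ''(S)`, realised by a homomorphism
`Φ : G' * G'' → T ≀ S` into the regular wreath product over `T = K' * K'' * F(S ∖ {1})`: the
coordinates of `Φ` are the Schreier cocycles `σ(s)⁻¹ g σ(f(g)⁻¹ s)`, the one on `G'` twisted by the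
generators `x_s`. Then `ψ (Φ h s) = σ''(s)⁻¹ h σ''(F(h)⁻¹ s)`, so `h ↦ Φ h 1` is a left inverse of
`ψ` on `N`, and it is a right inverse because it is one on generators.
-/

open Monoid
open scoped Monoid.Coprod

namespace RegularWreathProduct

variable {D Q G : Type*} [Group D] [Group Q] [Group G]

-- Exactly the condition for `g ↦ ⟨(c · g), f g⟩` to be a homomorphism `G →* D ≀ᵣ Q`.
def IsCocycle (f : G →* Q) (c : Q → G → D) : Prop :=
  ∀ q g₁ g₂, c q (g₁ * g₂) = c q g₁ * c ((f g₁)⁻¹ * q) g₂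

variable {f : G →* Q} {c : Q → G → D}

lemma IsCocycle.apply_one (hc : IsCocycle f c) (q : Q) : c q 1 = 1 := by
  simpa using hc q 1 1

lemma IsCocycle.map {D' : Type*} [Group D'] (hc : IsCocycle f c) (φ : D →* D') :
    IsCocycle f fun q g => φ (c q g) := fun q g₁ g₂ => by
  simp only [hc q g₁ g₂, map_mul]

lemma IsCocycle.conj (hc : IsCocycle f c) (x : Q → D) :
    IsCocycle f fun q g => x q * c q g * (x ((f g)⁻¹ * q))⁻¹ := fun q g₁ g₂ => by
  simp only [hc q g₁ g₂, map_mul, mul_inv_rev, mul_assoc, inv_mul_cancel_left]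

def ofCocycle (f : G →* Q) (c : Q → G → D) (hc : IsCocycle f c) : G →* D ≀ᵣ Q where
  toFun g := ⟨fun q => c q g, f g⟩
  map_one' := RegularWreathProduct.ext (funext hc.apply_one) (map_one f)
  map_mul' g₁ g₂ := RegularWreathProduct.ext (funext fun q => hc q g₁ g₂) (map_mul f g₁ g₂)

@[simp]
lemma ofCocycle_left (hc : IsCocycle f c) (g : G) : (ofCocycle f c hc g).left = fun q => c q g :=
  rfl

@[simp]
lemma ofCocycle_right (hc : IsCocycle f c) (g : G) : (ofCocycle f c hc g).right = f g := rfl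

end RegularWreathProduct

namespace MonoidHom

variable {G S : Type*} [Group G] [Group S] (f : G →* S)

lemma exists_section_one (hf : Function.Surjective f) : ∃ σ : S → G, σ 1 = 1 ∧ ∀ s, f (σ s) = s :=
  ⟨fun s => Function.surjInv hf s * (Function.surjInv hf 1)⁻¹, mul_inv_cancel _, fun s => by
    simp [Function.surjInv_eq hf]⟩

def schreier (σ : S → G) (s : S) (g : G) : G := (σ s)⁻¹ * g * σ ((f g)⁻¹ * s)

lemma isCocycle_schreier (σ : S → G) : RegularWreathProduct.IsCocycle f (f.schreier σ) :=
  fun s g₁ g₂ => by simp only [schreier, map_mul, mul_inv_rev, mul_assoc, mul_inv_cancel_left]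

variable {f} {σ : S → G}

lemma schreier_mem_ker (hσ : ∀ s, f (σ s) = s) (s : S) (g : G) : f.schreier σ s g ∈ f.ker := by
  simp [schreier, hσ]

def schreierKer (hσ : ∀ s, f (σ s) = s) (s : S) (g : G) : f.ker :=
  ⟨f.schreier σ s g, schreier_mem_ker hσ s g⟩

@[simp]
lemma coe_schreierKer (hσ : ∀ s, f (σ s) = s) (s : S) (g : G) :
    (schreierKer hσ s g : G) = f.schreier σ s g :=
  rfl

lemma isCocycle_schreierKer (hσ : ∀ s, f (σ s) = s) :
    RegularWreathProduct.IsCocycle f (schreierKer hσ) := fun s g₁ g₂ =>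
  Subtype.ext (f.isCocycle_schreier σ s g₁ g₂)

lemma schreierKer_one_of_mem_ker (hσ₁ : σ 1 = 1) (hσ : ∀ s, f (σ s) = s) (k : f.ker) :
    schreierKer hσ 1 k = k :=
  Subtype.ext (by simp [schreierKer, schreier, hσ₁, f.mem_ker.1 k.2])

lemma schreierKer_section_self (hσ₁ : σ 1 = 1) (hσ : ∀ s, f (σ s) = s) (s : S) :
    schreierKer hσ s (σ s) = 1 :=
  Subtype.ext (by simp [schreierKer, schreier, hσ₁, hσ])

end MonoidHom

namespace KerCoprodLift

open Coprod
open MonoidHom (schreierKer isCocycle_schreierKer)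
open RegularWreathProduct (ofCocycle)

variable {G' G'' S : Type*} [Group G'] [Group G''] [Group S] {f' : G' →* S} {f'' : G'' →* S}

variable (f' f'') in
abbrev KerCoprodFree : Type _ := f'.ker ∗ (f''.ker ∗ FreeGroup {s : S // s ≠ 1})

variable (f' f'') in
open scoped Classical in
noncomputable def gen (s : S) : KerCoprodFree f' f'' :=
  if h : s = 1 then 1 else inr (inr (.of ⟨s, h⟩))

variable (f' f'') in
lemma gen_one : gen f' f'' 1 = 1 := dif_pos rfl

variable {σ' : S → G'} {σ'' : S → G''}

variable (f' f'' σ' σ'') in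
def toCoprod : KerCoprodFree f' f'' →* G' ∗ G'' :=
  lift (inl.comp f'.ker.subtype)
    (lift (inr.comp f''.ker.subtype) (FreeGroup.lift fun s => (inr (σ'' s))⁻¹ * inl (σ' s)))

@[simp]
lemma toCoprod_inl (k : f'.ker) : toCoprod f' f'' σ' σ'' (inl k) = inl (k : G') :=
  lift_apply_inl _ _ k

@[simp]
lemma toCoprod_inr_inl (k : f''.ker) : toCoprod f' f'' σ' σ'' (inr (inl k)) = inr (k : G'') := by
  simp [toCoprod]

lemma toCoprod_gen (hσ'₁ : σ' 1 = 1) (hσ''₁ : σ'' 1 = 1) (s : S) :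
    toCoprod f' f'' σ' σ'' (gen f' f'' s) = (inr (σ'' s))⁻¹ * inl (σ' s) := by
  by_cases h : s = 1
  · subst h; simp [gen_one, hσ'₁, hσ''₁]
  · simp [gen, h, toCoprod]

lemma toCoprod_mem_ker (hσ' : ∀ s, f' (σ' s) = s) (hσ'' : ∀ s, f'' (σ'' s) = s)
    (t : KerCoprodFree f' f'') : toCoprod f' f'' σ' σ'' t ∈ (lift f' f'').ker := by
  suffices (lift f' f'').comp (toCoprod f' f'' σ' σ'') = 1 from DFunLike.congr_fun this t
  refine hom_ext (MonoidHom.ext fun k => k.2) (hom_ext (MonoidHom.ext fun k => k.2) ?_)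
  exact FreeGroup.ext_hom _ _ fun s => by simp [toCoprod, hσ', hσ'']

variable (hσ' : ∀ s, f' (σ' s) = s) (hσ'' : ∀ s, f'' (σ'' s) = s)

noncomputable def toWreath : G' ∗ G'' →* KerCoprodFree f' f'' ≀ᵣ S :=
  lift
    (ofCocycle f'
      (fun s g => gen f' f'' s * inl (schreierKer hσ' s g) * (gen f' f'' ((f' g)⁻¹ * s))⁻¹)
      (((isCocycle_schreierKer hσ').map _).conj _))
    (ofCocycle f'' (fun s g => (inr.comp inl) (schreierKer hσ'' s g))
      ((isCocycle_schreierKer hσ'').map _))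

lemma toWreath_right (h : G' ∗ G'') : (toWreath hσ' hσ'' h).right = lift f' f'' h := by
  suffices RegularWreathProduct.rightHom.comp (toWreath hσ' hσ'') = lift f' f'' from
    DFunLike.congr_fun this h
  exact hom_ext rfl rfl

variable {hσ' hσ''} in
lemma toCoprod_toWreath_left (hσ'₁ : σ' 1 = 1) (hσ''₁ : σ'' 1 = 1) (h : G' ∗ G'') (s : S) :
    toCoprod f' f'' σ' σ'' ((toWreath hσ' hσ'' h).left s) =
      (inr (σ'' s))⁻¹ * h * inr (σ'' ((lift f' f'' h)⁻¹ * s)) := by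
  induction h using Coprod.induction_on generalizing s with
  | inl g =>
    simp [toWreath, toCoprod_gen hσ'₁ hσ''₁, MonoidHom.schreier]
    group
  | inr g => simp [toWreath, MonoidHom.schreier]
  | mul x y hx hy =>
    simp only [map_mul, RegularWreathProduct.mul_left, Pi.mul_apply, hx, hy, toWreath_right]
    group

noncomputable def rewriting : (lift f' f'').ker →* KerCoprodFree f' f'' where
  toFun n := (toWreath hσ' hσ'' n).left 1
  map_one' := by simp
  map_mul' n m := by simp [toWreath_right, (lift f' f'').mem_ker.1 n.2]

@[simp]
lemma rewriting_apply (n : (lift f' f'').ker) :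
    rewriting hσ' hσ'' n = (toWreath hσ' hσ'' n).left 1 :=
  rfl

variable {hσ' hσ''}

lemma toCoprod_rewriting (hσ'₁ : σ' 1 = 1) (hσ''₁ : σ'' 1 = 1) (n : (lift f' f'').ker) :
    toCoprod f' f'' σ' σ'' (rewriting hσ' hσ'' n) = n := by
  simpa [(lift f' f'').mem_ker.1 n.2, hσ''₁] using
    toCoprod_toWreath_left (hσ' := hσ') (hσ'' := hσ'') hσ'₁ hσ''₁ n 1

lemma rewriting_toCoprod (hσ'₁ : σ' 1 = 1) (hσ''₁ : σ'' 1 = 1) :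
    (rewriting hσ' hσ'').comp
        ((toCoprod f' f'' σ' σ'').codRestrict _ (toCoprod_mem_ker hσ' hσ'')) = MonoidHom.id _ := by
  refine hom_ext ?_ (hom_ext ?_ ?_)
  · ext k
    simp [toWreath, gen_one, MonoidHom.schreierKer_one_of_mem_ker hσ'₁, f'.mem_ker.1 k.2]
  · ext k
    simp [toWreath, MonoidHom.schreierKer_one_of_mem_ker hσ''₁]
  · refine FreeGroup.ext_hom _ _ fun s => ?_
    simp [toWreath, toCoprod, hσ', hσ'', gen, s.2, MonoidHom.schreierKer_section_self hσ'₁,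
      MonoidHom.schreierKer_section_self hσ''₁]

noncomputable def kerLiftEquiv (hσ'₁ : σ' 1 = 1) (hσ''₁ : σ'' 1 = 1) :
    (lift f' f'').ker ≃* KerCoprodFree f' f'' :=
  (rewriting hσ' hσ'').toMulEquiv
    ((toCoprod f' f'' σ' σ'').codRestrict _ (toCoprod_mem_ker hσ' hσ''))
    (MonoidHom.ext fun n => Subtype.ext (toCoprod_rewriting hσ'₁ hσ''₁ n))
    (rewriting_toCoprod hσ'₁ hσ''₁)

end KerCoprodLift

/-- **Lemma 5.** If `f' : G' → S` and `f'' : G'' → S` are surjective group homomorphisms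
with kernels `K'` and `K''`, then the kernel of the induced homomorphism
`f' * f'' : G' * G'' → S` is isomorphic to the free product `K' * K'' * F(S \ {e})`,
where `F(S \ {e})` is the free group on the set of non-identity elements of `S`. -/
theorem ker_coprod_lift_iso {G' G'' S : Type} [Group G'] [Group G''] [Group S]
    (f' : G' →* S) (f'' : G'' →* S)
    (hf' : Function.Surjective f') (hf'' : Function.Surjective f'') :
    Nonempty ((MonoidHom.ker (Monoid.Coprod.lift f' f'')) ≃*
      Monoid.Coprod (MonoidHom.ker f')
        (Monoid.Coprod (MonoidHom.ker f'') (FreeGroup {s : S // s ≠ 1}))) := by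
  obtain ⟨σ', hσ'₁, hσ'⟩ := f'.exists_section_one hf'
  obtain ⟨σ'', hσ''₁, hσ''⟩ := f''.exists_section_one hf''
  exact ⟨KerCoprodLift.kerLiftEquiv (hσ' := hσ') (hσ'' := hσ'') hσ'₁ hσ''₁⟩
end

section
/- Let \(Z = \{ z z' : z \in Z_3, z' \in Z_3' \} \subset A\), where \(Z_3 = \{1, a_1, a_2, a_1 a_2, a_2 a_1, a_1 a_2 a_1\}\) and \(Z_3' = \{1, a_3, a_4, a_3 a_4, a_4 a_3, a_4 a_3 a_4\}\). Suppose \(\mu, \nu, \mu', \nu' \in Z\), \(1 \le j, k \le 8\), and \(\mu a_j \nu^{-1} = \mu' a_k \nu'^{-1}\) is a nontrivial element of \(Q = \ker f\). Then \(j = k\). -/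
/-- The pairs of indices (0-based: `aᵢ ↦ i - 1`) of commuting generators of the group `A`:
these encode the commutation relations `a₁a₃ = a₃a₁`, `a₁a₄ = a₄a₁`, `a₂a₃ = a₃a₂`,
`a₂a₄ = a₄a₂`, `a₁a₇ = a₇a₁`, `a₁a₈ = a₈a₁`, `a₄a₅ = a₅a₄`, `a₄a₆ = a₆a₄`, `a₅a₈ = a₈a₅`. -/
def commPairs : List (Fin 8 × Fin 8) :=
  [(0, 2), (0, 3), (1, 2), (1, 3), (0, 6), (0, 7), (3, 4), (3, 5), (4, 7)]

/-- The defining relations of the group `A`: the generators `a₁, …, a₈` (indexed by `Fin 8`)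
are involutions, and the pairs listed in `commPairs` commute. -/
def ARels : Set (FreeGroup (Fin 8)) :=
  {r | (∃ i : Fin 8, r = .of i * .of i) ∨
    ∃ p ∈ commPairs, r = .of p.1 * .of p.2 * (.of p.1)⁻¹ * (.of p.2)⁻¹}

/-- The group `A`: the graph product of 8 groups of order two determined by the
graph with edges `commPairs`. -/
abbrev GroupA := PresentedGroup ARels

/-- The images in `S₃ × S₃` of the generators of `A`:
`a₁, a₅ ↦ ((1 2), e)`, `a₂, a₆ ↦ ((2 3), e)`, `a₃, a₇ ↦ (e, (1 2))`, `a₄, a₈ ↦ (e, (2 3))`. -/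
def aImage : Fin 8 → Equiv.Perm (Fin 3) × Equiv.Perm (Fin 3) :=
  ![(Equiv.swap 0 1, 1), (Equiv.swap 1 2, 1), (1, Equiv.swap 0 1), (1, Equiv.swap 1 2),
    (Equiv.swap 0 1, 1), (Equiv.swap 1 2, 1), (1, Equiv.swap 0 1), (1, Equiv.swap 1 2)]

theorem ARels_hold : ∀ r ∈ ARels, FreeGroup.lift aImage r = 1 := by
  rintro r (⟨i, rfl⟩ | ⟨p, hp, rfl⟩)
  · simp only [map_mul, FreeGroup.lift_apply_of]
    revert i; decide
  · simp only [map_mul, map_inv, FreeGroup.lift_apply_of]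
    fin_cases hp <;> decide

/-- The homomorphism `f : A → S₃ × S₃` of Proposition 6. -/
def fA : GroupA →* Equiv.Perm (Fin 3) × Equiv.Perm (Fin 3) :=
  PresentedGroup.toGroup ARels_hold

/-- The coset representatives `Z₃ = {1, a₁, a₂, a₁a₂, a₂a₁, a₁a₂a₁} ⊆ A`. -/
def Zthree : Set GroupA :=
  {1, PresentedGroup.of 0, PresentedGroup.of 1,
    PresentedGroup.of 0 * PresentedGroup.of 1,
    PresentedGroup.of 1 * PresentedGroup.of 0,
    PresentedGroup.of 0 * PresentedGroup.of 1 * PresentedGroup.of 0}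

/-- The coset representatives `Z₃' = {1, a₃, a₄, a₃a₄, a₄a₃, a₄a₃a₄} ⊆ A`. -/
def Zthree' : Set GroupA :=
  {1, PresentedGroup.of 2, PresentedGroup.of 3,
    PresentedGroup.of 2 * PresentedGroup.of 3,
    PresentedGroup.of 3 * PresentedGroup.of 2,
    PresentedGroup.of 3 * PresentedGroup.of 2 * PresentedGroup.of 3}

/-- The system `Z = Z₃ · Z₃'` of representatives of the cosets of `Q = ker f` in `A`. -/
def Zreps : Set GroupA := {x | ∃ z ∈ Zthree, ∃ z' ∈ Zthree', x = z * z'}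

/-!
If `j` (say) is one of `5, …, 8`, the parity of the number of occurrences of `aⱼ` is a
homomorphism `A → ℤ/2` that vanishes on `Z`, so it forces `k = j`.

Otherwise `a₁, a₂` commute with `a₃, a₄`, and `Z₃'` has the same shape as `Z₃` in the pair
`(a₄, a₃)`. Hence `μ aⱼ ν⁻¹ = w₁ w₂`, where `wᵢ = x ℓ y⁻¹` with `x, y` among
`1, s, t, st, ts, sts` and `ℓ ∈ {1, s, t}`, for `(s, t) = (a₁, a₂)` resp. `(a₄, a₃)`. Such words
have length at most 7, so they are detected by the dihedral group `D₆` of order 12: as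
`μ aⱼ ν⁻¹ ≠ 1`, some `wᵢ` has nontrivial image in `D₆`. Since `μ aⱼ ν⁻¹ ∈ ker f`, that image is
`(st)³`, which forces `ℓ = t`, i.e. `j = 2` for `i = 1` and `j = 3` for `i = 2`. The images in
`D₆` depend only on `μ aⱼ ν⁻¹`, so the same argument applied to `μ' aₖ ν'⁻¹` gives `k = j`.
-/

open DihedralGroup Equiv

section Dihedral

variable {G H : Type*} [Group G] [Group H]

def dihedralRep (s t : G) : Fin 6 → G := ![1, s, t, s * t, t * s, s * t * s]

def dihedralLetter (s t : G) : Fin 3 → G := ![1, s, t]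

def dihedralWord (s t : G) (i : Fin 6) (u : Fin 3) (i' : Fin 6) : G :=
  dihedralRep s t i * dihedralLetter s t u * (dihedralRep s t i')⁻¹

lemma map_dihedralRep (φ : G →* H) (s t : G) (i : Fin 6) :
    φ (dihedralRep s t i) = dihedralRep (φ s) (φ t) i := by
  fin_cases i <;> simp [dihedralRep]

lemma map_dihedralLetter (φ : G →* H) (s t : G) (u : Fin 3) :
    φ (dihedralLetter s t u) = dihedralLetter (φ s) (φ t) u := by
  fin_cases u <;> simp [dihedralLetter]

lemma map_dihedralWord (φ : G →* H) (s t : G) (i : Fin 6) (u : Fin 3) (i' : Fin 6) :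
    φ (dihedralWord s t i u i') = dihedralWord (φ s) (φ t) i u i' := by
  simp only [dihedralWord, map_mul, map_inv, map_dihedralRep, map_dihedralLetter]

lemma dihedralRep_one_one (i : Fin 6) : dihedralRep (1 : G) 1 i = 1 := by
  fin_cases i <;> simp [dihedralRep]

lemma dihedralWord_one_one (i : Fin 6) (u : Fin 3) (i' : Fin 6) :
    dihedralWord (1 : G) 1 i u i' = 1 := by
  fin_cases u <;> simp [dihedralWord, dihedralRep_one_one, dihedralLetter]

lemma dihedralRep_mem {K : Subgroup G} {s t : G} (hs : s ∈ K) (ht : t ∈ K) (i : Fin 6) :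
    dihedralRep s t i ∈ K := by
  fin_cases i <;> simp [dihedralRep, K.mul_mem, K.one_mem, hs, ht]

lemma dihedralLetter_mem {K : Subgroup G} {s t : G} (hs : s ∈ K) (ht : t ∈ K) (u : Fin 3) :
    dihedralLetter s t u ∈ K := by
  fin_cases u <;> simp [dihedralLetter, K.one_mem, hs, ht]

lemma dihedralWord_mem {K : Subgroup G} {s t : G} (hs : s ∈ K) (ht : t ∈ K)
    (i : Fin 6) (u : Fin 3) (i' : Fin 6) : dihedralWord s t i u i' ∈ K :=
  K.mul_mem (K.mul_mem (dihedralRep_mem hs ht i) (dihedralLetter_mem hs ht u))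
    (K.inv_mem (dihedralRep_mem hs ht i'))

lemma map_dihedralWord_mul_eq_left (φ : G →* H) {s t s' t' : G} (hs' : φ s' = 1)
    (ht' : φ t' = 1) (i : Fin 6) (u : Fin 3) (i' m : Fin 6) (v : Fin 3) (m' : Fin 6) :
    φ (dihedralWord s t i u i' * dihedralWord s' t' m v m') = dihedralWord (φ s) (φ t) i u i' := by
  rw [map_mul, map_dihedralWord φ s', hs', ht', dihedralWord_one_one, mul_one, map_dihedralWord]

lemma map_dihedralWord_mul_eq_right (φ : G →* H) {s t s' t' : G} (hs : φ s = 1)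
    (ht : φ t = 1) (i : Fin 6) (u : Fin 3) (i' m : Fin 6) (v : Fin 3) (m' : Fin 6) :
    φ (dihedralWord s t i u i' * dihedralWord s' t' m v m') =
      dihedralWord (φ s') (φ t') m v m' := by
  rw [map_mul, map_dihedralWord φ s, hs, ht, dihedralWord_one_one, one_mul, map_dihedralWord]

-- The only relation of `D₆` beyond `s² = t² = 1` is `(st)⁶ = 1`, which no word of length at most
-- 7 can use.
lemma dihedralWord_eq_one_of_D6 {s t : G} (hs : s * s = 1) (ht : t * t = 1) {i : Fin 6}
    {u : Fin 3} {i' : Fin 6} (h : dihedralWord (sr 0 : DihedralGroup 6) (sr 1) i u i' = 1) :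
    dihedralWord s t i u i' = 1 := by
  have hs' : s⁻¹ = s := inv_eq_of_mul_eq_one_right hs
  have ht' : t⁻¹ = t := inv_eq_of_mul_eq_one_right ht
  have hs'' : ∀ x, s * (s * x) = x := fun x => by rw [← mul_assoc, hs, one_mul]
  have ht'' : ∀ x, t * (t * x) = x := fun x => by rw [← mul_assoc, ht, one_mul]
  fin_cases i <;> fin_cases u <;> fin_cases i' <;>
    first
      | exact absurd h (by decide)
      | simp [dihedralWord, dihedralRep, dihedralLetter, mul_assoc, hs, ht, hs', ht', hs'', ht'']

lemma commute_of_mem_closure {S T : Set G}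
    (h : ∀ a ∈ S, ∀ b ∈ T, Commute a b) {x y : G} (hx : x ∈ Subgroup.closure S)
    (hy : y ∈ Subgroup.closure T) : Commute x y := by
  have hle : Subgroup.closure S ≤ Subgroup.centralizer (Subgroup.closure T) := by
    rw [Subgroup.centralizer_closure, Subgroup.closure_le]
    exact fun a ha => Subgroup.mem_centralizer_iff.2 fun b hb => (h a ha b hb).symm.eq
  exact (Subgroup.mem_centralizer_iff.1 (hle hx) y hy).symm

lemma mul_mul_mul_inv_eq_of_commute {x x' l l' y y' : G}
    (h₁ : Commute x' l) (h₂ : Commute (x' * l' * y'⁻¹) y⁻¹) :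
    x * x' * (l * l') * (y * y')⁻¹ = x * l * y⁻¹ * (x' * l' * y'⁻¹) := by
  calc x * x' * (l * l') * (y * y')⁻¹ = x * (x' * l) * l' * y'⁻¹ * y⁻¹ := by group
    _ = x * l * ((x' * l' * y'⁻¹) * y⁻¹) := by rw [h₁.eq]; group
    _ = x * l * y⁻¹ * (x' * l' * y'⁻¹) := by rw [h₂.eq]; group

end Dihedral

-- The words killed by `S₃` are those sent to `1` or `r 3 = (st)³` in `D₆`, and the only ones of
-- the second kind are `sts · t · (ts)⁻¹` and `ts · t · (sts)⁻¹`.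
lemma letter_eq_two_of_dihedralWord : ∀ σ τ : Perm (Fin 3), σ * σ = 1 → τ * τ = 1 → σ ≠ 1 →
    τ ≠ 1 → σ ≠ τ → ∀ i u i', dihedralWord σ τ i u i' = 1 →
    dihedralWord (sr 0 : DihedralGroup 6) (sr 1) i u i' ≠ 1 → u = 2 := by
  decide

namespace GroupA

open PresentedGroup

section Lift

variable {G : Type*} [Group G]

lemma lift_rels_eq_one (v : Fin 8 → G) (hsq : ∀ i, v i * v i = 1)
    (hcomm : ∀ p ∈ commPairs, v p.1 * v p.2 = v p.2 * v p.1) :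
    ∀ r ∈ ARels, FreeGroup.lift v r = 1 := by
  rintro r (⟨i, rfl⟩ | ⟨p, hp, rfl⟩)
  · simp [hsq]
  · simp [hcomm p hp]

def lift (v : Fin 8 → G) (hsq : ∀ i, v i * v i = 1)
    (hcomm : ∀ p ∈ commPairs, v p.1 * v p.2 = v p.2 * v p.1) : GroupA →* G :=
  toGroup (lift_rels_eq_one v hsq hcomm)

lemma lift_of (v : Fin 8 → G) (hsq : ∀ i, v i * v i = 1)
    (hcomm : ∀ p ∈ commPairs, v p.1 * v p.2 = v p.2 * v p.1) (i : Fin 8) :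
    lift v hsq hcomm (of i) = v i :=
  toGroup.of _

end Lift

lemma of_mul_self (i : Fin 8) : (of i : GroupA) * of i = 1 :=
  one_of_mem (Or.inl ⟨i, rfl⟩)

lemma of_commute {i j : Fin 8} (h : (i, j) ∈ commPairs) : Commute (of i : GroupA) (of j) :=
  commutatorElement_eq_one_iff_commute.mp (one_of_mem (Or.inr ⟨(i, j), h, rfl⟩))

lemma fA_of (i : Fin 8) : fA (of i) = aImage i :=
  toGroup.of _

def leftProj : GroupA →* DihedralGroup 6 :=
  lift ![sr 0, sr 1, 1, 1, 1, 1, 1, 1] (by decide) (by decide)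

def rightProj : GroupA →* DihedralGroup 6 :=
  lift ![1, 1, sr 1, sr 0, 1, 1, 1, 1] (by decide) (by decide)

def letterParity (i : Fin 8) : GroupA →* Multiplicative (ZMod 2) :=
  lift (fun l => .ofAdd (if l = i then 1 else 0)) (fun l => by split_ifs <;> decide)
    (fun _ _ => mul_comm _ _)

lemma Zthree_eq_range : Zthree = Set.range (dihedralRep (of 0) (of 1)) := by
  ext x
  simp only [Zthree, dihedralRep, Matrix.range_cons, Matrix.range_empty, Set.union_empty,
    Set.union_singleton, Set.union_insert, Set.mem_insert_iff, Set.mem_singleton_iff]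
  tauto

lemma Zthree'_eq_range : Zthree' = Set.range (dihedralRep (of 3) (of 2)) := by
  ext x
  simp only [Zthree', dihedralRep, Matrix.range_cons, Matrix.range_empty, Set.union_empty,
    Set.union_singleton, Set.union_insert, Set.mem_insert_iff, Set.mem_singleton_iff]
  tauto

lemma mem_Zreps {μ : GroupA} :
    μ ∈ Zreps ↔ ∃ i m, μ = dihedralRep (of 0) (of 1) i * dihedralRep (of 3) (of 2) m := by
  simp [Zreps, Zthree_eq_range, Zthree'_eq_range]

def leftLetter : Fin 8 → Fin 3 := ![1, 2, 0, 0, 0, 0, 0, 0]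

def rightLetter : Fin 8 → Fin 3 := ![0, 0, 2, 1, 0, 0, 0, 0]

lemma of_eq_dihedralLetter_mul {j : Fin 8} (hj : j.val < 4) :
    (of j : GroupA) = dihedralLetter (of 0) (of 1) (leftLetter j) *
      dihedralLetter (of 3) (of 2) (rightLetter j) := by
  fin_cases j <;> simp_all [leftLetter, rightLetter, dihedralLetter]

lemma eq_one_of_leftLetter_eq_two : ∀ {j : Fin 8}, leftLetter j = 2 → j = 1 := by
  decide

lemma eq_two_of_rightLetter_eq_two : ∀ {j : Fin 8}, rightLetter j = 2 → j = 2 := by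
  decide

lemma commute_of_mem_closure_left_right {x y : GroupA}
    (hx : x ∈ Subgroup.closure {of 0, of 1}) (hy : y ∈ Subgroup.closure {of 3, of 2}) :
    Commute x y := by
  refine commute_of_mem_closure ?_ hx hy
  rintro a (rfl | rfl) b (rfl | rfl) <;> exact of_commute (by decide)

lemma exists_eq_dihedralWord_mul {μ ν : GroupA} (hμ : μ ∈ Zreps) (hν : ν ∈ Zreps) {j : Fin 8}
    (hj : j.val < 4) : ∃ i i' m m', μ * of j * ν⁻¹ =
      dihedralWord (of 0) (of 1) i (leftLetter j) i' *
        dihedralWord (of 3) (of 2) m (rightLetter j) m' := by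
  obtain ⟨i, m, rfl⟩ := mem_Zreps.1 hμ
  obtain ⟨i', m', rfl⟩ := mem_Zreps.1 hν
  have h₀ : (of 0 : GroupA) ∈ Subgroup.closure {of 0, of 1} := Subgroup.subset_closure (.inl rfl)
  have h₁ : (of 1 : GroupA) ∈ Subgroup.closure {of 0, of 1} := Subgroup.subset_closure (.inr rfl)
  have h₃ : (of 3 : GroupA) ∈ Subgroup.closure {of 3, of 2} := Subgroup.subset_closure (.inl rfl)
  have h₂ : (of 2 : GroupA) ∈ Subgroup.closure {of 3, of 2} := Subgroup.subset_closure (.inr rfl)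
  refine ⟨i, i', m, m', ?_⟩
  rw [of_eq_dihedralLetter_mul hj]
  exact mul_mul_mul_inv_eq_of_commute
    (commute_of_mem_closure_left_right (dihedralLetter_mem h₀ h₁ _) (dihedralRep_mem h₃ h₂ _)).symm
    (commute_of_mem_closure_left_right (Subgroup.inv_mem _ (dihedralRep_mem h₀ h₁ _))
      (dihedralWord_mem h₃ h₂ _ _ _)).symm

section Projections

variable (i : Fin 6) (u : Fin 3) (i' m : Fin 6) (v : Fin 3) (m' : Fin 6)

lemma leftProj_dihedralWord_mul :
    leftProj (dihedralWord (of 0) (of 1) i u i' * dihedralWord (of 3) (of 2) m v m') =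
      dihedralWord (sr 0) (sr 1) i u i' := by
  simp [leftProj, lift_of, map_dihedralWord_mul_eq_left]

lemma rightProj_dihedralWord_mul :
    rightProj (dihedralWord (of 0) (of 1) i u i' * dihedralWord (of 3) (of 2) m v m') =
      dihedralWord (sr 0) (sr 1) m v m' := by
  simp [rightProj, lift_of, map_dihedralWord_mul_eq_right]

lemma fst_fA_dihedralWord_mul :
    (fA (dihedralWord (of 0) (of 1) i u i' * dihedralWord (of 3) (of 2) m v m')).1 =
      dihedralWord (swap 0 1) (swap 1 2) i u i' := by
  simpa [fA_of, aImage] using map_dihedralWord_mul_eq_left ((MonoidHom.fst _ _).comp fA)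
    (s := of 0) (t := of 1) (by simp [fA_of, aImage]) (by simp [fA_of, aImage]) i u i' m v m'

lemma snd_fA_dihedralWord_mul :
    (fA (dihedralWord (of 0) (of 1) i u i' * dihedralWord (of 3) (of 2) m v m')).2 =
      dihedralWord (swap 1 2) (swap 0 1) m v m' := by
  simpa [fA_of, aImage] using map_dihedralWord_mul_eq_right ((MonoidHom.snd _ _).comp fA)
    (s' := of 3) (t' := of 2) (by simp [fA_of, aImage]) (by simp [fA_of, aImage]) i u i' m v m'

end Projections

section Letters

variable {g : GroupA} {i i' m m' : Fin 6} {u v : Fin 3}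

lemma eq_one_of_leftProj_eq_one_of_rightProj_eq_one
    (hg : g = dihedralWord (of 0) (of 1) i u i' * dihedralWord (of 3) (of 2) m v m')
    (hl : leftProj g = 1) (hr : rightProj g = 1) : g = 1 := by
  rw [hg, leftProj_dihedralWord_mul] at hl
  rw [hg, rightProj_dihedralWord_mul] at hr
  rw [hg, dihedralWord_eq_one_of_D6 (of_mul_self 0) (of_mul_self 1) hl,
    dihedralWord_eq_one_of_D6 (of_mul_self 3) (of_mul_self 2) hr, one_mul]

lemma leftLetter_eq_two
    (hg : g = dihedralWord (of 0) (of 1) i u i' * dihedralWord (of 3) (of 2) m v m')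
    (hf : fA g = 1) (hl : leftProj g ≠ 1) : u = 2 := by
  subst hg
  refine letter_eq_two_of_dihedralWord (swap 0 1) (swap 1 2) (by decide) (by decide) (by decide)
    (by decide) (by decide) i u i' ?_ (by rwa [leftProj_dihedralWord_mul] at hl)
  rw [← fst_fA_dihedralWord_mul, hf, Prod.fst_one]

lemma rightLetter_eq_two
    (hg : g = dihedralWord (of 0) (of 1) i u i' * dihedralWord (of 3) (of 2) m v m')
    (hf : fA g = 1) (hr : rightProj g ≠ 1) : v = 2 := by
  subst hg
  refine letter_eq_two_of_dihedralWord (swap 1 2) (swap 0 1) (by decide) (by decide) (by decide)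
    (by decide) (by decide) m v m' ?_ (by rwa [rightProj_dihedralWord_mul] at hr)
  rw [← snd_fA_dihedralWord_mul, hf, Prod.snd_one]

end Letters

lemma eq_of_lt_four {μ ν μ' ν' : GroupA} (hμ : μ ∈ Zreps) (hν : ν ∈ Zreps) (hμ' : μ' ∈ Zreps)
    (hν' : ν' ∈ Zreps) {j k : Fin 8} (heq : μ * of j * ν⁻¹ = μ' * of k * ν'⁻¹)
    (hf : fA (μ * of j * ν⁻¹) = 1) (hne : μ * of j * ν⁻¹ ≠ 1) (hj : j.val < 4)
    (hk : k.val < 4) : j = k := by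
  obtain ⟨i, i', m, m', hg⟩ := exists_eq_dihedralWord_mul hμ hν hj
  obtain ⟨n, n', p, p', hg'⟩ := exists_eq_dihedralWord_mul hμ' hν' hk
  rw [← heq] at hg'
  by_cases hl : leftProj (μ * of j * ν⁻¹) = 1
  · have hr : rightProj (μ * of j * ν⁻¹) ≠ 1 :=
      fun hr => hne (eq_one_of_leftProj_eq_one_of_rightProj_eq_one hg hl hr)
    rw [eq_two_of_rightLetter_eq_two (rightLetter_eq_two hg hf hr),
      eq_two_of_rightLetter_eq_two (rightLetter_eq_two hg' hf hr)]
  · rw [eq_one_of_leftLetter_eq_two (leftLetter_eq_two hg hf hl),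
      eq_one_of_leftLetter_eq_two (leftLetter_eq_two hg' hf hl)]

lemma letterParity_of (i l : Fin 8) :
    letterParity i (of l) = .ofAdd (if l = i then 1 else 0) :=
  lift_of _ _ _ l

lemma letterParity_eq_one_of_mem_Zreps {i : Fin 8} (hi : 4 ≤ i.val) {μ : GroupA}
    (hμ : μ ∈ Zreps) : letterParity i μ = 1 := by
  obtain ⟨n, m, rfl⟩ := mem_Zreps.1 hμ
  have h : ∀ l : Fin 8, l.val < 4 → letterParity i (of l) = 1 := fun l hl => by
    rw [letterParity_of, if_neg (by omega), ofAdd_zero]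
  simp [map_dihedralRep, h, dihedralRep_one_one]

lemma eq_of_four_le {μ ν μ' ν' : GroupA} (hμ : μ ∈ Zreps) (hν : ν ∈ Zreps) (hμ' : μ' ∈ Zreps)
    (hν' : ν' ∈ Zreps) {j k : Fin 8} (heq : μ * of j * ν⁻¹ = μ' * of k * ν'⁻¹)
    (hj : 4 ≤ j.val) : j = k := by
  have h := congrArg (letterParity j) heq
  simp only [map_mul, map_inv, letterParity_eq_one_of_mem_Zreps hj hμ,
    letterParity_eq_one_of_mem_Zreps hj hν, letterParity_eq_one_of_mem_Zreps hj hμ',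
    letterParity_eq_one_of_mem_Zreps hj hν', letterParity_of] at h
  by_contra hjk
  simp [Ne.symm hjk] at h

end GroupA

/-- **Lemma 7.** If `μ aⱼ ν⁻¹ = μ' aₖ ν'⁻¹` is a nontrivial element of `Q = ker f`,
with `μ, ν, μ', ν' ∈ Z`, then `j = k`. -/
theorem index_determined (μ ν μ' ν' : GroupA)
    (hμ : μ ∈ Zreps) (hν : ν ∈ Zreps) (hμ' : μ' ∈ Zreps) (hν' : ν' ∈ Zreps)
    (j k : Fin 8)
    (heq : μ * PresentedGroup.of j * ν⁻¹ = μ' * PresentedGroup.of k * ν'⁻¹)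
    (hker : μ * PresentedGroup.of j * ν⁻¹ ∈ MonoidHom.ker fA)
    (hne : μ * PresentedGroup.of j * ν⁻¹ ≠ 1) :
    j = k := by
  by_cases hj : 4 ≤ j.val
  · exact GroupA.eq_of_four_le hμ hν hμ' hν' heq hj
  by_cases hk : 4 ≤ k.val
  · exact (GroupA.eq_of_four_le hμ' hν' hμ hν heq.symm hk).symm
  exact GroupA.eq_of_lt_four hμ hν hμ' hν' heq hker hne (by omega) (by omega)
end

section
/- Let \(Z = \{ z z' : z \in Z_3, z' \in Z_3' \} \subset A\), where \(Z_3 = \{1, a_1, a_2, a_1 a_2, a_2 a_1, a_1 a_2 a_1\}\) and \(Z_3' = \{1, a_3, a_4, a_3 a_4, a_4 a_3, a_4 a_3 a_4\}\). For \(j \in \{1, 4\}\) and any \(\mu, \nu \in Z\), if \(\mu a_j \nu^{-1}\) lies in \(Q = \ker f\), then \(\mu a_j \nu^{-1} = 1\). (Equivalently, the sets \(\mathcal{X}_1\) and \(\mathcal{X}_4\) of nontrivial elements of \(Q\) of the form \(\mu a_1 \nu^{-1}\), respectively \(\mu a_4 \nu^{-1}\), are empty.) -/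
/-!
Every element of `Z` is determined by its image under `f`: the first factor of `f` sees only the
`Z₃`-part and is injective on `Z₃`, the second factor sees only the `Z₃'`-part and is injective on
`Z₃'`. Moreover `Z aⱼ ⊆ Z` for `j ∈ {1, 4}`: `Z₃ a₁ = Z₃` and `a₁` commutes with `Z₃'`, while
`Z₃' a₄ = Z₃'`. So if `μ aⱼ ν⁻¹ ∈ ker f`, then `μ aⱼ` and `ν` are elements of `Z` with the same
image, hence equal.
-/

open scoped Pointwise

theorem PresentedGroup.of_mul_self_of_mem {α : Type*} {rels : Set (FreeGroup α)} {i : α}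
    (h : FreeGroup.of i * FreeGroup.of i ∈ rels) : (of i : PresentedGroup rels) * of i = 1 :=
  one_of_mem h

theorem PresentedGroup.commute_of_of_mem {α : Type*} {rels : Set (FreeGroup α)} {i j : α}
    (h : FreeGroup.of i * FreeGroup.of j * (FreeGroup.of i)⁻¹ * (FreeGroup.of j)⁻¹ ∈ rels) :
    Commute (of i : PresentedGroup rels) (of j) :=
  commutatorElement_eq_one_iff_commute.1 (one_of_mem h)

theorem MonoidHom.mul_inv_eq_one_of_injOn {G H : Type*} [Group G] [Group H] {f : G →* H}
    {S : Set G} (hf : Set.InjOn f S) {x y : G} (hx : x ∈ S) (hy : y ∈ S) (h : x * y⁻¹ ∈ f.ker) :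
    x * y⁻¹ = 1 := by
  rw [mem_ker, map_mul, map_inv, mul_inv_eq_one] at h
  rw [hf hx hy h, mul_inv_cancel]

theorem MonoidHom.injOn_mul_of_injOn_fst_of_injOn_snd {G H K : Type*} [Monoid G] [Monoid H]
    [Monoid K] {f : G →* H × K} {S T : Set G}
    (hS : Set.InjOn (fun x => (f x).1) S) (hT : Set.InjOn (fun x => (f x).2) T)
    (hS₂ : ∀ x ∈ S, (f x).2 = 1) (hT₁ : ∀ x ∈ T, (f x).1 = 1) : Set.InjOn f (S * T) := by
  rintro _ ⟨s, hs, t, ht, rfl⟩ _ ⟨s', hs', t', ht', rfl⟩ h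
  have h₁ : (f s).1 = (f s').1 := by
    simpa [hT₁ t ht, hT₁ t' ht'] using congrArg Prod.fst h
  have h₂ : (f t).2 = (f t').2 := by
    simpa [hS₂ s hs, hS₂ s' hs'] using congrArg Prod.snd h
  rw [hS hs hs' h₁, hT ht ht' h₂]

section GroupA

local notation "a_" i => (PresentedGroup.of i : GroupA)

@[simp]
lemma of_mul_self (i : Fin 8) : (a_ i) * (a_ i) = 1 :=
  PresentedGroup.of_mul_self_of_mem (Or.inl ⟨i, rfl⟩)

lemma commute_of_of_mem_commPairs {p : Fin 8 × Fin 8} (hp : p ∈ commPairs) :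
    Commute (a_ p.1) (a_ p.2) :=
  PresentedGroup.commute_of_of_mem (Or.inr ⟨p, hp, rfl⟩)

lemma fA_of (i : Fin 8) : fA (a_ i) = aImage i := PresentedGroup.toGroup.of ARels_hold

lemma Zreps_eq_mul : Zreps = Zthree * Zthree' := by
  ext
  simp [Zreps, Set.mem_mul, eq_comm]

lemma injOn_fst_fA_Zthree : Set.InjOn (fun z => (fA z).1) Zthree := by
  rintro z hz w hw h
  simp only [Zthree, Set.mem_insert_iff, Set.mem_singleton_iff] at hz hw
  rcases hz with rfl | rfl | rfl | rfl | rfl | rfl <;>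
    rcases hw with rfl | rfl | rfl | rfl | rfl | rfl <;>
    first | rfl | (simp only [map_mul, map_one, fA_of] at h; exact absurd h (by decide))

lemma injOn_snd_fA_Zthree' : Set.InjOn (fun z => (fA z).2) Zthree' := by
  rintro z hz w hw h
  simp only [Zthree', Set.mem_insert_iff, Set.mem_singleton_iff] at hz hw
  rcases hz with rfl | rfl | rfl | rfl | rfl | rfl <;>
    rcases hw with rfl | rfl | rfl | rfl | rfl | rfl <;>
    first | rfl | (simp only [map_mul, map_one, fA_of] at h; exact absurd h (by decide))

lemma snd_fA_of_mem_Zthree {z : GroupA} (hz : z ∈ Zthree) : (fA z).2 = 1 := by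
  simp only [Zthree, Set.mem_insert_iff, Set.mem_singleton_iff] at hz
  rcases hz with rfl | rfl | rfl | rfl | rfl | rfl <;> simp [fA_of, aImage]

lemma fst_fA_of_mem_Zthree' {z : GroupA} (hz : z ∈ Zthree') : (fA z).1 = 1 := by
  simp only [Zthree', Set.mem_insert_iff, Set.mem_singleton_iff] at hz
  rcases hz with rfl | rfl | rfl | rfl | rfl | rfl <;> simp [fA_of, aImage]

lemma injOn_fA_Zreps : Set.InjOn fA Zreps := by
  rw [Zreps_eq_mul]
  exact MonoidHom.injOn_mul_of_injOn_fst_of_injOn_snd injOn_fst_fA_Zthree injOn_snd_fA_Zthree'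
    (fun _ => snd_fA_of_mem_Zthree) (fun _ => fst_fA_of_mem_Zthree')

lemma mul_of_zero_mem_Zthree {z : GroupA} (hz : z ∈ Zthree) : z * (a_ 0) ∈ Zthree := by
  simp only [Zthree, Set.mem_insert_iff, Set.mem_singleton_iff] at hz
  rcases hz with rfl | rfl | rfl | rfl | rfl | rfl <;> simp [Zthree, mul_assoc]

lemma mul_of_three_mem_Zthree' {z : GroupA} (hz : z ∈ Zthree') : z * (a_ 3) ∈ Zthree' := by
  simp only [Zthree', Set.mem_insert_iff, Set.mem_singleton_iff] at hz
  rcases hz with rfl | rfl | rfl | rfl | rfl | rfl <;> simp [Zthree', mul_assoc]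

lemma commute_of_zero_of_mem_Zthree' {z : GroupA} (hz : z ∈ Zthree') : Commute (a_ 0) z := by
  have h₂ : Commute (a_ 0) (a_ 2) := commute_of_of_mem_commPairs (p := (0, 2)) (by decide)
  have h₃ : Commute (a_ 0) (a_ 3) := commute_of_of_mem_commPairs (p := (0, 3)) (by decide)
  simp only [Zthree', Set.mem_insert_iff, Set.mem_singleton_iff] at hz
  rcases hz with rfl | rfl | rfl | rfl | rfl | rfl <;> simp [Commute.mul_right, h₂, h₃]

lemma mul_of_mem_Zreps {μ : GroupA} (hμ : μ ∈ Zreps) {j : Fin 8} (hj : j = 0 ∨ j = 3) :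
    μ * (a_ j) ∈ Zreps := by
  obtain ⟨z, hz, z', hz', rfl⟩ := hμ
  rcases hj with rfl | rfl
  · refine ⟨z * (a_ 0), mul_of_zero_mem_Zthree hz, z', hz', ?_⟩
    rw [mul_assoc, ← (commute_of_zero_of_mem_Zthree' hz').eq, mul_assoc]
  · exact ⟨z, hz, z' * (a_ 3), mul_of_three_mem_Zthree' hz', mul_assoc _ _ _⟩

end GroupA

/-- The sets `𝒳₁` and `𝒳₄` are empty: for `j ∈ {1, 4}` (indices `0` and `3` here) and
`μ, ν ∈ Z`, if `μ aⱼ ν⁻¹ ∈ Q = ker f` then `μ aⱼ ν⁻¹ = 1`. -/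
theorem X1_X4_empty (μ ν : GroupA) (hμ : μ ∈ Zreps) (hν : ν ∈ Zreps)
    (j : Fin 8) (hj : j = 0 ∨ j = 3)
    (hker : μ * PresentedGroup.of j * ν⁻¹ ∈ MonoidHom.ker fA) :
    μ * PresentedGroup.of j * ν⁻¹ = 1 :=
  MonoidHom.mul_inv_eq_one_of_injOn injOn_fA_Zreps (mul_of_mem_Zreps hμ hj) hν hker
end
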